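/- For any finite nonempty subtraction set S of positive integers, the zero-sum scoring outcome satisfies 0 ≤ o_zs(h) ≤ max S for every heap size h; in particular the starting player never has a disadvantage, and their advantage is at most the largest legal move. -/

import Mathlib

inductive TB : Type
  | FvF | FvA | AvF | AvA
deriving DecidableEq

def TB.dual : TB → TB
  | .FvF => .FvF
  | .FvA => .AvF
  | .AvF => .FvA
  | .AvA => .AvA

/-- `true` iff the current mover is friendly (first letter F). -/
def TB.friendly : TB → Bool
  | .FvF => true
  | .FvA => true
  | .AvF => false
  | .AvA => false

/-- PSPE outcome pair `(o¹_X h, o²_X h)` for subtraction set `S`. -/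
def outc (S : Finset ℕ) (h : ℕ) (X : TB) : ℕ × ℕ :=
  let M := S.filter fun s => 0 < s ∧ s ≤ h
  if hM : M.Nonempty then
    have hA : M.attach.Nonempty := (Finset.attach_nonempty_iff).mpr hM
    let f : {s // s ∈ M} → ℕ := fun s =>
      have hs : h - s.1 < h := by
        have h1 := (Finset.mem_filter.mp s.2).2
        omega
      s.1 + (outc S (h - s.1) X.dual).2
    let o1 := M.attach.sup f
    let Mstar := M.attach.filter fun s => f s = o1
    have hMs : Mstar.Nonempty := by
      obtain ⟨b, hb, hbe⟩ := Finset.exists_mem_eq_sup M.attach hA f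
      exact ⟨b, Finset.mem_filter.mpr ⟨hb, hbe.symm⟩⟩
    let g : {s // s ∈ M} → ℕ := fun s =>
      have hs : h - s.1 < h := by
        have h1 := (Finset.mem_filter.mp s.2).2
        omega
      (outc S (h - s.1) X.dual).1
    if X.friendly then (o1, Mstar.sup g) else (o1, Mstar.inf' hMs g)
  else (0, 0)
termination_by h

/-- First player's PSPE utility. -/
def o1 (S : Finset ℕ) (X : TB) (h : ℕ) : ℕ := (outc S h X).1

/-- Second player's PSPE utility. -/
def o2 (S : Finset ℕ) (X : TB) (h : ℕ) : ℕ := (outc S h X).2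

/-- Zero-sum scoring outcome for subtraction set `S`. -/
def zs (S : Finset ℕ) (h : ℕ) : ℤ :=
  let M := S.filter fun s => 0 < s ∧ s ≤ h
  if hM : M.Nonempty then
    M.attach.sup' ((Finset.attach_nonempty_iff).mpr hM) fun s =>
      have hs : h - s.1 < h := by
        have h1 := (Finset.mem_filter.mp s.2).2
        omega
      (s.1 : ℤ) - zs S (h - s.1)
  else 0
termination_by h

/-!
Playing the largest legal move `s₀` already secures a nonnegative score: every move legal at
`h - s₀` is also legal at `h`, hence at most `s₀`, so the opponent gains at most `s₀` afterwards.
Conversely each option `s - zs S (h - s)` is at most `s`, because outcomes are nonnegative.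
-/

namespace zs

variable {S : Finset ℕ} {h : ℕ}

theorem eq_zero_of_forall_lt (H : ∀ s ∈ S, 0 < s → h < s) : zs S h = 0 := by
  rw [zs, dif_neg]
  rintro ⟨s, hs⟩
  rw [Finset.mem_filter] at hs
  exact absurd (H s hs.1 hs.2.1) (not_lt.2 hs.2.2)

theorem sub_le_zs {s : ℕ} (hs : s ∈ S) (hs0 : 0 < s) (hsh : s ≤ h) :
    (s : ℤ) - zs S (h - s) ≤ zs S h := by
  have hmem : s ∈ S.filter fun s => 0 < s ∧ s ≤ h := Finset.mem_filter.2 ⟨hs, hs0, hsh⟩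
  conv_rhs => rw [zs, dif_pos ⟨s, hmem⟩]
  exact Finset.le_sup' (fun t : {t // t ∈ S.filter fun s => 0 < s ∧ s ≤ h} =>
    (t.1 : ℤ) - zs S (h - t.1)) (Finset.mem_attach _ ⟨s, hmem⟩)

theorem le_of_forall_sub_le {c : ℤ} (hc : 0 ≤ c)
    (H : ∀ s ∈ S, 0 < s → s ≤ h → (s : ℤ) - zs S (h - s) ≤ c) : zs S h ≤ c := by
  rw [zs]
  split_ifs
  · refine Finset.sup'_le _ _ fun ⟨s, hs⟩ _ => ?_
    rw [Finset.mem_filter] at hs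
    exact H s hs.1 hs.2.1 hs.2.2
  · exact hc

theorem le_of_forall_le (hnonneg : ∀ k < h, 0 ≤ zs S k) {c : ℕ}
    (hc : ∀ s ∈ S, 0 < s → s ≤ h → s ≤ c) : zs S h ≤ c :=
  le_of_forall_sub_le (Int.natCast_nonneg c) fun s hs hs0 hsh => by
    have := hnonneg (h - s) (by omega)
    have := hc s hs hs0 hsh
    omega

theorem nonneg (S : Finset ℕ) (h : ℕ) : 0 ≤ zs S h := by
  induction h using Nat.strong_induction_on with
  | _ h ih =>
  by_cases hmove : ∃ s ∈ S, 0 < s ∧ s ≤ h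
  · obtain ⟨s₀, hs₀, hmax⟩ := (S.filter fun s => 0 < s ∧ s ≤ h).exists_max_image id
      (by simpa [Finset.Nonempty] using hmove)
    obtain ⟨hs₀S, hs₀pos, hs₀h⟩ := by simpa only [Finset.mem_filter] using hs₀
    have hreply : zs S (h - s₀) ≤ s₀ :=
      le_of_forall_le (fun k hk => ih k (by omega)) fun t ht ht0 hth =>
        hmax t (Finset.mem_filter.2 ⟨ht, ht0, by omega⟩)
    linarith [sub_le_zs hs₀S hs₀pos hs₀h]
  · exact (eq_zero_of_forall_lt fun s hs hs0 => not_le.1 fun hsh => hmove ⟨s, hs, hs0, hsh⟩).ge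

end zs

theorem stmt13_general (S : Finset ℕ) (hS : S.Nonempty) (h : ℕ) :
    0 ≤ zs S h ∧ zs S h ≤ (S.max' hS : ℤ) :=
  ⟨zs.nonneg S h, zs.le_of_forall_le (fun k _ => zs.nonneg S k) fun s hs _ _ => S.le_max' s hs⟩

theorem stmt13 (S : Finset ℕ) (hS : S.Nonempty) (hpos : ∀ s ∈ S, 0 < s) (h : ℕ) :
    0 ≤ zs S h ∧ zs S h ≤ (S.max' hS : ℤ) :=
  stmt13_general S hS h
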